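/- Assume the structural conditions: g, g̃ : [0,∞) → [0,∞) and b : [0,∞) → (0,∞) are continuous; h₁ : [0,∞) → [0,∞) is continuously differentiable with h₁(t) ≤ M and h₁′(t) ≤ h₁(t) for all t ≥ 0, where M > 0 is a constant; m > 3 and n > 1 are integers; g₁, g₂, h₂ : [0,∞) → [0,∞) are continuous with h₂(t) = h₁(t)/(1 + h₁(t)), g₂(t) ≥ 1 + g₁(t), g₁(t) ≥ max{g(t), g̃(t)}, and g₁(t) > 0 for all t ≥ 0, and ∫₀^t g₁(τ)dτ → +∞ as t → +∞. Then the closed-loop system is locally integral input-to-state stable: there exist β of class 𝒦𝓛, σ₀, σ of class 𝒦∞, γ₀, γ of class 𝒦, and R > 0 such that for every T > 0, every continuous disturbance d : [0,T] → ℝ, and every continuously differentiable solution x = (x₁, x₂) : [0,T] → ℝ² of the closed-loop system, if |x(0)| + σ₀(∫₀^T γ₀(|d(s)|)ds) ≤ R, then |x(t)| ≤ β(|x(0)|, t) + σ(∫₀^t γ(|d(s)|)ds) for all t ∈ [0,T]. -/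

import Mathlib

open Set MeasureTheory Filter

noncomputable section

/-- A function of class 𝒦: continuous, strictly increasing on `[0,∞)`, vanishing at `0`,
and mapping `[0,∞)` into `[0,∞)`. -/
def ClassK (f : ℝ → ℝ) : Prop :=
  ContinuousOn f (Ici 0) ∧ StrictMonoOn f (Ici 0) ∧ f 0 = 0 ∧ ∀ s ∈ Ici (0:ℝ), 0 ≤ f s

/-- A function of class 𝒦∞: class 𝒦 and unbounded. -/
def ClassKInf (f : ℝ → ℝ) : Prop := ClassK f ∧ Tendsto f atTop atTop

/-- A function of class 𝒦𝓛. -/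
def ClassKL (β : ℝ → ℝ → ℝ) : Prop :=
  ContinuousOn (fun p : ℝ × ℝ => β p.1 p.2) (Ici 0 ×ˢ Ici 0) ∧
  (∀ t ∈ Ici (0:ℝ), ClassK (fun s => β s t)) ∧
  ∀ r > (0:ℝ), StrictAntiOn (fun t => β r t) (Ici 0) ∧
    Tendsto (fun t => β r t) atTop (nhds 0)

/-- `y` is absolutely continuous on `[0,T]` with (a.e.) derivative `y'`, i.e. `y` is the
indefinite integral of the integrable function `y'`. -/
def IsACDeriv (T : ℝ) (y y' : ℝ → ℝ) : Prop :=
  IntegrableOn y' (Icc 0 T) ∧ ∀ t ∈ Icc (0:ℝ) T, y t = y 0 + ∫ s in (0:ℝ)..t, y' s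

/- ========================= auxiliary lemmas ========================= -/

lemma aux_sqrt_add_le (a b : ℝ) (ha : 0 ≤ a) (hb : 0 ≤ b) :
    Real.sqrt (a+b) ≤ Real.sqrt a + Real.sqrt b := by
  rw [show a + b = (Real.sqrt a + Real.sqrt b)^2 - 2*(Real.sqrt a * Real.sqrt b) by
    nlinarith [Real.sq_sqrt ha, Real.sq_sqrt hb]]
  calc Real.sqrt ((Real.sqrt a + Real.sqrt b)^2 - 2*(Real.sqrt a * Real.sqrt b))
      ≤ Real.sqrt ((Real.sqrt a + Real.sqrt b)^2) := by
        apply Real.sqrt_le_sqrt; nlinarith [Real.sqrt_nonneg a, Real.sqrt_nonneg b]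
    _ = Real.sqrt a + Real.sqrt b := Real.sqrt_sq (by positivity)

lemma aux_tendsto_sqrt_atTop : Tendsto Real.sqrt atTop atTop := by
  apply Filter.tendsto_atTop_atTop.2
  intro c
  refine ⟨(max 0 c)^2, fun x hx => ?_⟩
  calc c ≤ max 0 c := le_max_right _ _
    _ = Real.sqrt ((max 0 c)^2) := (Real.sqrt_sq (le_max_left _ _)).symm
    _ ≤ Real.sqrt x := Real.sqrt_le_sqrt hx

lemma aux_classK_id : ClassK (fun s => s) :=
  ⟨continuous_id.continuousOn, fun a _ b _ h => h, rfl, fun s hs => hs⟩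

lemma aux_classKInf_sigma (k : ℝ) (hk : 0 < k) :
    ClassKInf (fun s => 2 * Real.sqrt (Real.sqrt (k * s))) := by
  constructor
  · refine ⟨?_, ?_, ?_, ?_⟩
    · exact (continuous_const.mul (Real.continuous_sqrt.comp (Real.continuous_sqrt.comp
        (continuous_const.mul continuous_id)))).continuousOn
    · intro s hs s' _ hss'
      have hks : 0 ≤ k * s := mul_nonneg hk.le hs
      have h1 : k * s < k * s' := mul_lt_mul_of_pos_left hss' hk
      have h2 : Real.sqrt (k*s) < Real.sqrt (k*s') := Real.sqrt_lt_sqrt hks h1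
      have h3 : Real.sqrt (Real.sqrt (k*s)) < Real.sqrt (Real.sqrt (k*s')) :=
        Real.sqrt_lt_sqrt (Real.sqrt_nonneg _) h2
      simpa using mul_lt_mul_of_pos_left h3 (by norm_num : (0:ℝ) < 2)
    · simp
    · intro s _; positivity
  · apply Filter.Tendsto.const_mul_atTop two_pos
    exact aux_tendsto_sqrt_atTop.comp (aux_tendsto_sqrt_atTop.comp
      (Filter.Tendsto.const_mul_atTop hk tendsto_id))

lemma key_ineq (M a e h h' g1 g2 gg ggt bb dd : ℝ) (m n : ℕ) (hm : 4 ≤ m) (hn : 2 ≤ n)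
    (ha : a^2 ≤ 1/4) (he : e^2 ≤ 1/4) (hh0 : 0 ≤ h) (hhM : h ≤ M) (hh' : h' ≤ h)
    (hgg0 : 0 ≤ gg) (hgg : gg ≤ g1) (hggt0 : 0 ≤ ggt) (hggt : ggt ≤ g1) (hg1 : 0 < g1)
    (hg2 : 1 + g1 ≤ g2) (hbb : 0 < bb) :
    a * (-g1*a + gg*a^m - h*e^3) + h'*e^4/4
      + (1+h) * e^3 * (h/(1+h)*a - g2*e + ggt*e^n - bb*a^2*e + dd)
    ≤ -g1*(a^2/2 + (1+h)*e^4/4) + (1+M)*|dd| := by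
  have h1 : (0:ℝ) < 1 + h := by linarith
  have he4 : (0:ℝ) ≤ e^4 := by positivity
  have habs : |a| ≤ 1/2 := by
    rw [← Real.sqrt_sq_eq_abs]
    calc Real.sqrt (a^2) ≤ Real.sqrt (1/4) := Real.sqrt_le_sqrt ha
      _ = 1/2 := by rw [show (1:ℝ)/4 = (1/2)^2 by norm_num, Real.sqrt_sq]; norm_num
  have hebs : |e| ≤ 1/2 := by
    rw [← Real.sqrt_sq_eq_abs]
    calc Real.sqrt (e^2) ≤ Real.sqrt (1/4) := Real.sqrt_le_sqrt he
      _ = 1/2 := by rw [show (1:ℝ)/4 = (1/2)^2 by norm_num, Real.sqrt_sq]; norm_num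
  -- bound 1 : gg * a^(m+1) ≤ g1 * a^2 / 2
  have hb1 : gg * (a * a^m) ≤ g1 * a^2 / 2 := by
    have h1a : a * a^m ≤ |a|^(m+1) := by
      rw [← pow_succ']
      calc a^(m+1) ≤ |a^(m+1)| := le_abs_self _
        _ = |a|^(m+1) := abs_pow a (m+1)
    have h2a : |a|^(m+1) ≤ a^2 * (1/2) := by
      have heq : |a|^(m+1) = |a|^2 * |a|^(m-1) := by
        rw [← pow_add]; congr 1; omega
      rw [heq, sq_abs]
      have hle : |a|^(m-1) ≤ |a|^1 := by
        apply pow_le_pow_of_le_one (abs_nonneg a) (by linarith) (by omega)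
      have h1' : |a|^1 = |a| := pow_one _
      nlinarith [sq_nonneg a, abs_nonneg a]
    calc gg * (a * a^m) ≤ gg * (a^2 * (1/2)) := by
          apply mul_le_mul_of_nonneg_left (le_trans h1a h2a) hgg0
      _ ≤ g1 * (a^2 * (1/2)) := by
          apply mul_le_mul_of_nonneg_right hgg; positivity
      _ = g1 * a^2 / 2 := by ring
  -- bound 2 : ggt * e^(n+3) ≤ g1 * e^4 / 2
  have hb2 : (1+h) * (ggt * (e^3 * e^n)) ≤ (1+h) * (g1 * e^4 / 2) := by
    apply mul_le_mul_of_nonneg_left _ h1.le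
    have h1e : e^3 * e^n ≤ |e|^(n+3) := by
      rw [← pow_add, show 3 + n = n + 3 by omega]
      calc e^(n+3) ≤ |e^(n+3)| := le_abs_self _
        _ = |e|^(n+3) := abs_pow e (n+3)
    have h2e : |e|^(n+3) ≤ e^4 * (1/2) := by
      have heq : |e|^(n+3) = |e|^4 * |e|^(n-1) := by
        rw [← pow_add]; congr 1; omega
      rw [heq, pow_abs, abs_of_nonneg he4]
      have hle : |e|^(n-1) ≤ |e|^1 := by
        apply pow_le_pow_of_le_one (abs_nonneg e) (by linarith) (by omega)
      have h1' : |e|^1 = |e| := pow_one _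
      nlinarith [he4, abs_nonneg e]
    calc ggt * (e^3 * e^n) ≤ ggt * (e^4 * (1/2)) := by
          apply mul_le_mul_of_nonneg_left (le_trans h1e h2e) hggt0
      _ ≤ g1 * (e^4 * (1/2)) := by
          apply mul_le_mul_of_nonneg_right hggt; positivity
      _ = g1 * e^4 / 2 := by ring
  -- bound 4 : (1+h)*e^3*dd ≤ (1+M)*|dd|
  have hb4 : (1+h) * e^3 * dd ≤ (1+M) * |dd| := by
    calc (1+h) * e^3 * dd ≤ |(1+h) * e^3 * dd| := le_abs_self _
      _ = (1+h) * |e|^3 * |dd| := by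
          rw [abs_mul, abs_mul, abs_of_pos h1, abs_pow]
      _ ≤ (1+M) * 1 * |dd| := by
          have he3 : |e|^3 ≤ 1 := by
            calc |e|^3 ≤ (1/2:ℝ)^3 := pow_le_pow_left₀ (abs_nonneg e) hebs 3
              _ ≤ 1 := by norm_num
          have hmm : (1+h) * |e|^3 ≤ (1+M) * 1 := by
            nlinarith [abs_nonneg e, pow_nonneg (abs_nonneg e) 3]
          apply mul_le_mul_of_nonneg_right hmm (abs_nonneg dd)
      _ = (1+M) * |dd| := by ring
  have expand : a * (-g1*a + gg*a^m - h*e^3) + h'*e^4/4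
      + (1+h) * e^3 * (h/(1+h)*a - g2*e + ggt*e^n - bb*a^2*e + dd)
      = -(g1*a^2) + gg*(a*a^m) + h'*e^4/4
        - (1+h)*g2*e^4 + (1+h)*(ggt*(e^3*e^n)) - (1+h)*bb*(a^2*e^4) + (1+h)*e^3*dd := by
    field_simp
    ring
  rw [expand]
  have H1 : h'*e^4 ≤ h*e^4 := mul_le_mul_of_nonneg_right hh' he4
  have H2 : h*e^4 ≤ (1+h)*e^4 := mul_le_mul_of_nonneg_right (by linarith) he4
  have H3 : (0:ℝ) ≤ (1+h)*e^4 := mul_nonneg h1.le he4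
  have H4 : (0:ℝ) ≤ (1+h)*g1*e^4 := mul_nonneg (mul_nonneg h1.le hg1.le) he4
  have H5 : (1+h)*(1+g1)*e^4 ≤ (1+h)*g2*e^4 :=
    mul_le_mul_of_nonneg_right (mul_le_mul_of_nonneg_left hg2 h1.le) he4
  have H9 : (0:ℝ) ≤ (1+h)*bb*(a^2*e^4) := by positivity
  linarith [hb1, hb2, hb4, H1, H2, H3, H4, H5, H9]

set_option maxHeartbeats 1600000 in
/-- Local integral input-to-state stability of the planar closed-loop system
`ẋ₁ = −g₁x₁ + g x₁^m − h₁ x₂³`, `ẋ₂ = h₂x₁ − g₂x₂ + g̃ x₂^n − b x₁²x₂ + d`. -/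
theorem stmt_14 (M : ℝ) (hM : 0 < M) (m n : ℕ) (hm : 3 < m) (hn : 1 < n)
    (g gt b h₁ h₁' g₁ g₂ h₂ : ℝ → ℝ)
    (hgc : ContinuousOn g (Ici 0)) (hgnn : ∀ t ∈ Ici (0:ℝ), 0 ≤ g t)
    (hgtc : ContinuousOn gt (Ici 0)) (hgtnn : ∀ t ∈ Ici (0:ℝ), 0 ≤ gt t)
    (hbc : ContinuousOn b (Ici 0)) (hbpos : ∀ t ∈ Ici (0:ℝ), 0 < b t)
    (hh₁d : ∀ t ∈ Ici (0:ℝ), HasDerivAt h₁ (h₁' t) t)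
    (hh₁'c : ContinuousOn h₁' (Ici 0))
    (hh₁nn : ∀ t ∈ Ici (0:ℝ), 0 ≤ h₁ t) (hh₁M : ∀ t ∈ Ici (0:ℝ), h₁ t ≤ M)
    (hh₁' : ∀ t ∈ Ici (0:ℝ), h₁' t ≤ h₁ t)
    (hg₁c : ContinuousOn g₁ (Ici 0)) (hg₁pos : ∀ t ∈ Ici (0:ℝ), 0 < g₁ t)
    (hg₁ge : ∀ t ∈ Ici (0:ℝ), max (g t) (gt t) ≤ g₁ t)
    (hg₁div : Tendsto (fun t => ∫ τ in (0:ℝ)..t, g₁ τ) atTop atTop)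
    (hg₂c : ContinuousOn g₂ (Ici 0)) (hg₂nn : ∀ t ∈ Ici (0:ℝ), 0 ≤ g₂ t)
    (hh₂c : ContinuousOn h₂ (Ici 0)) (hh₂nn : ∀ t ∈ Ici (0:ℝ), 0 ≤ h₂ t)
    (hh₂ : ∀ t ∈ Ici (0:ℝ), h₂ t = h₁ t / (1 + h₁ t))
    (hg₂ : ∀ t ∈ Ici (0:ℝ), 1 + g₁ t ≤ g₂ t) :
    ∃ β : ℝ → ℝ → ℝ, ∃ σ₀ σ γ₀ γ : ℝ → ℝ, ∃ R : ℝ,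
      ClassKL β ∧ ClassKInf σ₀ ∧ ClassKInf σ ∧ ClassK γ₀ ∧ ClassK γ ∧ 0 < R ∧
      ∀ T > (0:ℝ), ∀ d : ℝ → ℝ, ContinuousOn d (Icc 0 T) →
        ∀ x₁ x₂ : ℝ → ℝ,
        (∀ t ∈ Icc (0:ℝ) T,
          HasDerivAt x₁ (-g₁ t * x₁ t + g t * x₁ t ^ m - h₁ t * x₂ t ^ 3) t) →
        (∀ t ∈ Icc (0:ℝ) T,
          HasDerivAt x₂ (h₂ t * x₁ t - g₂ t * x₂ t + gt t * x₂ t ^ n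
            - b t * x₁ t ^ 2 * x₂ t + d t) t) →
        Real.sqrt (x₁ 0 ^ 2 + x₂ 0 ^ 2) + σ₀ (∫ s in (0:ℝ)..T, γ₀ |d s|) ≤ R →
        ∀ t ∈ Icc (0:ℝ) T,
          Real.sqrt (x₁ t ^ 2 + x₂ t ^ 2)
            ≤ β (Real.sqrt (x₁ 0 ^ 2 + x₂ 0 ^ 2)) t + σ (∫ s in (0:ℝ)..t, γ |d s|) := by
  set c : ℝ := 1/2 + (1+M)/4 with hcdef
  have hc : (0:ℝ) < c := by rw [hcdef]; linarith
  set G : ℝ → ℝ := fun t => ∫ τ in (0:ℝ)..t, g₁ τ with hGdef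
  set R : ℝ := min (1/32) (1/(32*(1+c))) with hRdef
  -- basic facts about G
  have hg₁int : ∀ a b : ℝ, 0 ≤ a → a ≤ b → IntervalIntegrable g₁ volume a b := by
    intro a b ha hab
    apply ContinuousOn.intervalIntegrable
    apply hg₁c.mono
    rw [uIcc_of_le hab]
    intro x hx; exact le_trans ha hx.1
  have hGadd : ∀ a b : ℝ, 0 ≤ a → a ≤ b → G b = G a + ∫ τ in a..b, g₁ τ := by
    intro a b ha hab
    simp only [hGdef]
    exact (intervalIntegral.integral_add_adjacent_intervals (hg₁int 0 a le_rfl ha)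
      (hg₁int a b ha hab)).symm
  have hGmono : ∀ a b : ℝ, 0 ≤ a → a ≤ b → G a ≤ G b := by
    intro a b ha hab
    rw [hGadd a b ha hab]
    have h0 : 0 ≤ ∫ τ in a..b, g₁ τ :=
      intervalIntegral.integral_nonneg hab (fun u hu => (hg₁pos u (le_trans ha hu.1)).le)
    linarith
  have hGstrict : ∀ a b : ℝ, 0 ≤ a → a < b → G a < G b := by
    intro a b ha hab
    rw [hGadd a b ha hab.le]
    have h0 : 0 < ∫ τ in a..b, g₁ τ := by
      apply intervalIntegral.intervalIntegral_pos_of_pos_on (hg₁int a b ha hab.le)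
        (fun x hx => hg₁pos x (le_trans ha hx.1.le)) hab
    linarith
  have hG0 : G 0 = 0 := by simp only [hGdef]; exact intervalIntegral.integral_same
  have hGnn : ∀ t : ℝ, 0 ≤ t → 0 ≤ G t := fun t ht => hG0 ▸ hGmono 0 t le_rfl ht
  have hGc : ContinuousOn G (Ici 0) := by
    intro t ht
    have ht0 : (0:ℝ) ≤ t := ht
    have hint : IntegrableOn g₁ (uIcc 0 (t+1)) volume := by
      rw [uIcc_of_le (by linarith)]
      exact (hg₁c.mono (fun x hx => hx.1)).integrableOn_Icc
    have h1 : ContinuousOn G (Icc 0 (t+1)) := by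
      have h2 := intervalIntegral.continuousOn_primitive_interval hint
      rw [uIcc_of_le (by linarith : (0:ℝ) ≤ t+1)] at h2
      exact h2
    have hmem : Icc 0 (t+1) ∈ nhdsWithin t (Ici 0) := by
      rw [← Ici_inter_Iic]
      exact inter_mem self_mem_nhdsWithin
        (mem_nhdsWithin_of_mem_nhds (Iic_mem_nhds (by linarith)))
    exact (h1 t ⟨ht0, by linarith⟩).mono_of_mem_nhdsWithin hmem
  have hGtop : Tendsto G atTop atTop := hg₁div
  clear_value G
  refine ⟨fun r t => 2 * Real.sqrt (Real.sqrt c * r) * Real.exp (-(G t)/4),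
    fun s => 2 * Real.sqrt (Real.sqrt ((1+M)*s)),
    fun s => 2 * Real.sqrt (Real.sqrt ((1+M)*s)),
    fun s => s, fun s => s, R,
    ?_, aux_classKInf_sigma _ (by linarith), aux_classKInf_sigma _ (by linarith),
    aux_classK_id, aux_classK_id, ?_, ?_⟩
  · -- ClassKL β
    refine ⟨?_, ?_, ?_⟩
    · apply ContinuousOn.mul
      · exact (continuous_const.mul (Real.continuous_sqrt.comp
          (continuous_const.mul continuous_fst))).continuousOn
      · apply Real.continuous_exp.comp_continuousOn
        have h1 : ContinuousOn (fun p : ℝ×ℝ => G p.2) ((Ici 0 : Set ℝ) ×ˢ (Ici 0 : Set ℝ)) :=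
          hGc.comp continuous_snd.continuousOn (fun p hp => hp.2)
        exact h1.neg.div_const 4
    · intro t _
      refine ⟨?_, ?_, ?_, ?_⟩
      · exact ((continuous_const.mul (Real.continuous_sqrt.comp
          (continuous_const.mul continuous_id))).mul continuous_const).continuousOn
      · intro s hs s' _ hss'
        have h1 : Real.sqrt c * s < Real.sqrt c * s' :=
          mul_lt_mul_of_pos_left hss' (Real.sqrt_pos.2 hc)
        have h2 : Real.sqrt (Real.sqrt c * s) < Real.sqrt (Real.sqrt c * s') :=
          Real.sqrt_lt_sqrt (mul_nonneg (Real.sqrt_nonneg c) hs) h1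
        have := mul_lt_mul_of_pos_left h2 (by norm_num : (0:ℝ) < 2)
        exact mul_lt_mul_of_pos_right this (Real.exp_pos _)
      · simp
      · intro s _; positivity
    · intro r hr
      constructor
      · intro t ht t' ht' htt'
        have h1 : G t < G t' := hGstrict t t' ht htt'
        have h2 : Real.exp (-(G t')/4) < Real.exp (-(G t)/4) := by
          apply Real.exp_lt_exp.2; linarith
        apply mul_lt_mul_of_pos_left h2
        have : (0:ℝ) < Real.sqrt c * r := mul_pos (Real.sqrt_pos.2 hc) hr
        positivity
      · have h1 : Tendsto (fun t => -(G t)/4) atTop atBot := by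
          apply Filter.Tendsto.atBot_div_const (by norm_num : (0:ℝ) < 4)
          exact tendsto_neg_atTop_atBot.comp hGtop
        have h2 : Tendsto (fun t => Real.exp (-(G t)/4)) atTop (nhds 0) :=
          Real.tendsto_exp_atBot.comp h1
        have h3 := h2.const_mul (2 * Real.sqrt (Real.sqrt c * r))
        simpa using h3
  · -- 0 < R
    rw [hRdef]
    apply lt_min (by norm_num)
    have : (0:ℝ) < 1 + c := by linarith
    positivity

  · -- main estimate
    intro T hT d hd x₁ x₂ hdx₁ hdx₂ hinit t ht
    simp only [] at hinit ⊢
    have hR32 : R ≤ 1/32 := hRdef ▸ min_le_left _ _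
    have hRc : R ≤ 1/(32*(1+c)) := hRdef ▸ min_le_right _ _
    have hR0 : (0:ℝ) < R := by
      rw [hRdef]
      apply lt_min (by norm_num)
      have h1c : (0:ℝ) < 1 + c := by linarith
      positivity
    clear hRdef
    clear_value R c
    have hT0 : (0:ℝ) ≤ T := hT.le
    have h0T : (0:ℝ) ∈ Icc (0:ℝ) T := ⟨le_rfl, hT0⟩
    have hsub : Icc (0:ℝ) T ⊆ Ici 0 := fun s hs => hs.1
    set r0 := Real.sqrt (x₁ 0^2 + x₂ 0^2) with hr0def
    clear_value r0
    have hr0nn : 0 ≤ r0 := hr0def ▸ Real.sqrt_nonneg _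
    set I : ℝ → ℝ := fun u => ∫ s in (0:ℝ)..u, |d s| with hIdef
    clear_value I
    have hIapp : ∀ u, I u = ∫ s in (0:ℝ)..u, |d s| := fun u => by rw [hIdef]
    rw [← hIapp T] at hinit
    have hdint : ∀ a b : ℝ, 0 ≤ a → a ≤ b → b ≤ T →
        IntervalIntegrable (fun s => |d s|) volume a b := by
      intro a b' ha hab hbT
      apply ContinuousOn.intervalIntegrable
      apply hd.abs.mono
      rw [uIcc_of_le hab]
      exact Icc_subset_Icc ha hbT
    have hInn : ∀ u ∈ Icc (0:ℝ) T, 0 ≤ I u := fun u hu => by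
      rw [hIapp u]
      exact intervalIntegral.integral_nonneg hu.1 (fun x _ => abs_nonneg _)
    have hImono : ∀ u ∈ Icc (0:ℝ) T, I u ≤ I T := by
      intro u hu
      have h1 : I T = I u + ∫ s in u..T, |d s| := by
        rw [hIapp u, hIapp T]
        exact (intervalIntegral.integral_add_adjacent_intervals
          (hdint 0 u le_rfl hu.1 hu.2) (hdint u T hu.1 hu.2 le_rfl)).symm
      have h2 : 0 ≤ ∫ s in u..T, |d s| :=
        intervalIntegral.integral_nonneg hu.2 (fun x _ => abs_nonneg _)
      linarith
    -- smallness from the initial condition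
    have hITnn : 0 ≤ I T := hInn T ⟨hT0, le_rfl⟩
    have hITnn' : 0 ≤ (1+M) * I T := by nlinarith
    have hσnn : 0 ≤ 2 * Real.sqrt (Real.sqrt ((1+M) * I T)) := by positivity
    have hr0R : r0 ≤ R := by linarith [hinit, hσnn]
    have hITsm : (1+M) * I T ≤ (R/2)^4 := by
      have h1 : Real.sqrt (Real.sqrt ((1+M)*I T)) ≤ R/2 := by linarith [hinit, hr0nn]
      have h2 : Real.sqrt ((1+M)*I T) ≤ (R/2)^2 := by
        have := pow_le_pow_left₀ (Real.sqrt_nonneg _) h1 2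
        rwa [Real.sq_sqrt (Real.sqrt_nonneg _)] at this
      have h3 := pow_le_pow_left₀ (Real.sqrt_nonneg _) h2 2
      rwa [Real.sq_sqrt hITnn', ← pow_mul] at h3
    have hcR : c * R^2 ≤ 1/1024 := by
      have h1c : (0:ℝ) < 1 + c := by linarith
      have h2 : c * R ≤ c * (1/(32*(1+c))) := mul_le_mul_of_nonneg_left hRc hc.le
      have h3 : c * (1/(32*(1+c))) ≤ 1/32 := by
        rw [mul_one_div, div_le_div_iff₀ (by positivity) (by norm_num)]
        nlinarith
      have h1 : c * R ≤ 1/32 := le_trans h2 h3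
      nlinarith [mul_le_mul h1 hR32 hR0.le (by norm_num : (0:ℝ) ≤ 1/32)]
    have hR4 : (R/2)^4 ≤ 1/1024 := by
      have h1 : R/2 ≤ 1/64 := by linarith
      have h2 : (R/2)^4 ≤ (1/64:ℝ)^4 :=
        pow_le_pow_left₀ (by linarith : (0:ℝ) ≤ R/2) h1 4
      norm_num at h2
      linarith
    -- the Lyapunov function
    set v : ℝ → ℝ := fun u => x₁ u^2/2 + (1+h₁ u)*x₂ u^4/4 with hvdef
    clear_value v
    have hvnn : ∀ u ∈ Icc (0:ℝ) T, 0 ≤ v u := by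
      intro u hu
      have h1 := hh₁nn u (hsub hu)
      simp only [hvdef]; positivity
    have hx₁c : ContinuousOn x₁ (Icc 0 T) :=
      fun s hs => (hdx₁ s hs).continuousAt.continuousWithinAt
    have hx₂c : ContinuousOn x₂ (Icc 0 T) :=
      fun s hs => (hdx₂ s hs).continuousAt.continuousWithinAt
    have hh₁cont : ContinuousOn h₁ (Ici 0) :=
      fun s hs => (hh₁d s hs).continuousAt.continuousWithinAt
    have hvc : ContinuousOn v (Icc 0 T) := by
      simp only [hvdef]
      exact ((hx₁c.pow 2).div_const 2).add
        (((continuousOn_const.add (hh₁cont.mono hsub)).mul (hx₂c.pow 4)).div_const 4)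
    have hvderiv : ∀ s ∈ Icc (0:ℝ) T, HasDerivAt v
        (x₁ s * (-g₁ s * x₁ s + g s * x₁ s ^ m - h₁ s * x₂ s ^ 3) + h₁' s * x₂ s^4/4
          + (1+h₁ s) * x₂ s^3 * (h₂ s * x₁ s - g₂ s * x₂ s + gt s * x₂ s ^ n
            - b s * x₁ s ^ 2 * x₂ s + d s)) s := by
      intro s hs
      rw [hvdef]
      have h1 := hdx₁ s hs
      have h2 := hdx₂ s hs
      have h3 := hh₁d s (hsub hs)
      have h4 := ((h1.fun_pow 2).div_const 2).fun_add (((h3.const_add 1).fun_mul (h2.fun_pow 4)).div_const 4)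
      refine h4.congr_deriv ?_
      push_cast
      ring
    have hkey : ∀ s ∈ Icc (0:ℝ) T, x₁ s^2 ≤ 1/4 → x₂ s^2 ≤ 1/4 →
        x₁ s * (-g₁ s * x₁ s + g s * x₁ s ^ m - h₁ s * x₂ s ^ 3) + h₁' s * x₂ s^4/4
          + (1+h₁ s) * x₂ s^3 * (h₂ s * x₁ s - g₂ s * x₂ s + gt s * x₂ s ^ n
            - b s * x₁ s ^ 2 * x₂ s + d s)
        ≤ -g₁ s * v s + (1+M) * |d s| := by
      intro s hs hA hB
      have hs0 := hsub hs
      rw [hh₂ s hs0]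
      have h5 := key_ineq M (x₁ s) (x₂ s) (h₁ s) (h₁' s) (g₁ s) (g₂ s) (g s) (gt s) (b s) (d s)
        m n (by omega) (by omega) hA hB (hh₁nn s hs0) (hh₁M s hs0) (hh₁' s hs0)
        (hgnn s hs0) (le_trans (le_max_left _ _) (hg₁ge s hs0)) (hgtnn s hs0)
        (le_trans (le_max_right _ _) (hg₁ge s hs0)) (hg₁pos s hs0) (hg₂ s hs0) (hbpos s hs0)
      calc x₁ s * (-g₁ s * x₁ s + g s * x₁ s ^ m - h₁ s * x₂ s ^ 3) + h₁' s * x₂ s^4/4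
          + (1+h₁ s) * x₂ s^3 * (h₁ s / (1 + h₁ s) * x₁ s - g₂ s * x₂ s + gt s * x₂ s ^ n
            - b s * x₁ s ^ 2 * x₂ s + d s)
          ≤ -g₁ s*(x₁ s^2/2 + (1+h₁ s)*x₂ s^4/4) + (1+M)*|d s| := h5
        _ = -g₁ s * v s + (1+M)*|d s| := by simp only [hvdef]
    -- exponential weight
    set E : ℝ → ℝ := fun u => Real.exp (G u) with hEdef
    clear_value E
    have hEc : ContinuousOn E (Icc 0 T) := by
      rw [hEdef]
      exact Real.continuous_exp.comp_continuousOn (hGc.mono hsub)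
    set k : ℝ → ℝ := fun u => E u * |d u| with hkdef
    clear_value k
    have hkc : ContinuousOn k (Icc 0 T) := by
      rw [hkdef]; exact hEc.mul hd.abs
    set J : ℝ → ℝ := fun u => ∫ s in (0:ℝ)..u, k s with hJdef
    clear_value J
    have hkint : ∀ u, u ∈ Icc (0:ℝ) T → IntervalIntegrable k volume 0 u := by
      intro u hu
      apply ContinuousOn.intervalIntegrable
      apply hkc.mono
      rw [uIcc_of_le hu.1]
      exact Icc_subset_Icc le_rfl hu.2
    have hJc : ContinuousOn J (Icc 0 T) := by
      rw [hJdef]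
      have hint : IntegrableOn k (uIcc 0 T) volume := by
        rw [uIcc_of_le hT0]; exact hkc.integrableOn_Icc
      have h2 := intervalIntegral.continuousOn_primitive_interval hint
      rw [uIcc_of_le hT0] at h2
      exact h2
    -- Gronwall-type estimate
    have gron : ∀ t₁ ∈ Icc (0:ℝ) T, (∀ s ∈ Ioo (0:ℝ) t₁, x₁ s^2 + x₂ s^2 ≤ 1/4) →
        v t₁ ≤ v 0 * Real.exp (-(G t₁)) + (1+M) * I t₁ := by
      intro t₁ ht₁ hsmall
      set F : ℝ → ℝ := fun u => v u * E u - (1+M) * J u with hFdef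
      clear_value F
      have hFc : ContinuousOn F (Icc 0 t₁) := by
        rw [hFdef]
        exact ((hvc.mul hEc).sub (continuousOn_const.mul hJc)).mono (Icc_subset_Icc le_rfl ht₁.2)
      have hderiv : ∀ s ∈ interior (Icc (0:ℝ) t₁), ∃ D, HasDerivAt F D s ∧ D ≤ 0 := by
        rw [interior_Icc]
        intro s hs
        rw [hFdef]
        have hsT : s ∈ Icc (0:ℝ) T := ⟨hs.1.le, le_trans hs.2.le ht₁.2⟩
        have hsIoo : s ∈ Ioo (0:ℝ) T := ⟨hs.1, lt_of_lt_of_le hs.2 ht₁.2⟩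
        have hG' : HasDerivAt G (g₁ s) s := by
          rw [hGdef]
          apply intervalIntegral.integral_hasDerivAt_right (hg₁int 0 s le_rfl hs.1.le)
          · exact ContinuousOn.stronglyMeasurableAtFilter isOpen_Ioi
              (hg₁c.mono (fun x hx => le_of_lt hx)) s hs.1
          · exact hg₁c.continuousAt (Ici_mem_nhds hs.1)
        have hE' : HasDerivAt E (Real.exp (G s) * g₁ s) s := by
          rw [hEdef]; exact hG'.exp
        have hJ' : HasDerivAt J (k s) s := by
          rw [hJdef]
          apply intervalIntegral.integral_hasDerivAt_right (hkint s hsT)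
          · exact ContinuousOn.stronglyMeasurableAtFilter isOpen_Ioo
              (hkc.mono Ioo_subset_Icc_self) s hsIoo
          · exact hkc.continuousAt (Icc_mem_nhds hsIoo.1 hsIoo.2)
        have hv' := hvderiv s hsT
        refine ⟨_, (hv'.mul hE').sub (hJ'.const_mul (1+M)), ?_⟩
        have hphis := hsmall s hs
        have hA : x₁ s^2 ≤ 1/4 := by linarith [sq_nonneg (x₂ s)]
        have hB : x₂ s^2 ≤ 1/4 := by linarith [sq_nonneg (x₁ s)]
        have h5 := hkey s hsT hA hB
        simp only [hkdef, hEdef]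
        linarith [mul_le_mul_of_nonneg_right h5 (Real.exp_pos (G s)).le]
      have hFdiff : DifferentiableOn ℝ F (interior (Icc (0:ℝ) t₁)) := fun s hs =>
        ((hderiv s hs).choose_spec.1).differentiableAt.differentiableWithinAt
      have hFder : ∀ s ∈ interior (Icc (0:ℝ) t₁), deriv F s ≤ 0 := by
        intro s hs
        rw [(hderiv s hs).choose_spec.1.deriv]
        exact (hderiv s hs).choose_spec.2
      have hanti : AntitoneOn F (Icc 0 t₁) :=
        antitoneOn_of_deriv_nonpos (convex_Icc _ _) hFc hFdiff hFder
      have hF0 : F t₁ ≤ F 0 := hanti (left_mem_Icc.2 ht₁.1) (right_mem_Icc.2 ht₁.1) ht₁.1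
      have hJ0 : J 0 = 0 := by simp only [hJdef]; exact intervalIntegral.integral_same
      have hE0 : E 0 = 1 := by simp only [hEdef, hG0]; exact Real.exp_zero
      have h6 : v t₁ * E t₁ ≤ v 0 + (1+M) * J t₁ := by
        simp only [hFdef, hJ0, hE0] at hF0; linarith
      have h7 : J t₁ ≤ E t₁ * I t₁ := by
        have h8 : ∀ x ∈ Icc (0:ℝ) t₁, k x ≤ E t₁ * |d x| := by
          intro x hx
          simp only [hkdef]
          apply mul_le_mul_of_nonneg_right _ (abs_nonneg _)
          simp only [hEdef]
          exact Real.exp_le_exp.2 (hGmono x t₁ hx.1 hx.2)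
        rw [hJdef]
        calc (∫ s in (0:ℝ)..t₁, k s) ≤ ∫ s in (0:ℝ)..t₁, E t₁ * |d s| :=
              intervalIntegral.integral_mono_on ht₁.1 (hkint t₁ ht₁)
                ((hdint 0 t₁ le_rfl ht₁.1 ht₁.2).const_mul (E t₁)) h8
          _ = E t₁ * I t₁ := by rw [hIapp t₁]; exact intervalIntegral.integral_const_mul _ _
      have hIt1 : 0 ≤ I t₁ := hInn t₁ ht₁
      have hEt₁pos : (0:ℝ) < E t₁ := by rw [hEdef]; exact Real.exp_pos _
      have h9 : v t₁ * E t₁ ≤ v 0 + (1+M)*(E t₁ * I t₁) := by nlinarith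
      have h13 : v t₁ ≤ (v 0 + (1+M)*(E t₁ * I t₁))/E t₁ := (le_div_iff₀ hEt₁pos).2 h9
      have h14 : (v 0 + (1+M)*(E t₁ * I t₁))/E t₁ = v 0 * (E t₁)⁻¹ + (1+M)*I t₁ := by
        field_simp
      have h16 : (E t₁)⁻¹ = Real.exp (-(G t₁)) := by
        simp only [hEdef]; exact (Real.exp_neg _).symm
      rw [← h16]
      rw [h14] at h13
      exact h13
    -- bounds on v 0
    have hr0sq : x₁ 0^2 + x₂ 0^2 = r0^2 := by
      rw [hr0def]; exact (Real.sq_sqrt (by positivity)).symm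
    have hφ0R : x₁ 0^2 + x₂ 0^2 ≤ R^2 := by
      rw [hr0sq]; exact pow_le_pow_left₀ hr0nn hr0R 2
    have hv0c : v 0 ≤ c * r0^2 := by
      have hh0 := hh₁nn 0 self_mem_Ici
      have hh0M := hh₁M 0 self_mem_Ici
      have h1 : x₂ 0^4 ≤ (x₁ 0^2 + x₂ 0^2)^2 := by nlinarith [sq_nonneg (x₁ 0), sq_nonneg (x₂ 0)]
      have hφ01 : x₁ 0^2 + x₂ 0^2 ≤ 1 := le_trans hφ0R (by nlinarith)
      have hφ0nn : 0 ≤ x₁ 0^2 + x₂ 0^2 := by positivity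
      have h4 : (0:ℝ) ≤ x₂ 0^4 := by positivity
      have h5 : (1+h₁ 0) * x₂ 0^4 ≤ (1+M) * x₂ 0^4 :=
        mul_le_mul_of_nonneg_right (by linarith) h4
      have h7 : (x₁ 0^2 + x₂ 0^2)^2 ≤ x₁ 0^2 + x₂ 0^2 := by nlinarith
      have h8 : (1+M) * x₂ 0^4 ≤ (1+M) * (x₁ 0^2 + x₂ 0^2) :=
        mul_le_mul_of_nonneg_left (le_trans h1 h7) (by linarith)
      simp only [hvdef, hcdef]
      rw [← hr0sq]
      linarith [sq_nonneg (x₂ 0), h5, h8]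
    have hv0R : v 0 ≤ c * R^2 := by
      have h1 : c * r0^2 ≤ c * R^2 :=
        mul_le_mul_of_nonneg_left (pow_le_pow_left₀ hr0nn hr0R 2) hc.le
      linarith
    have hv0nn : 0 ≤ v 0 := hvnn 0 h0T
    -- pointwise relation between φ and v
    have hφv : ∀ u ∈ Icc (0:ℝ) T, x₁ u^2 + x₂ u^2 ≤ 2 * v u + 2 * Real.sqrt (v u) := by
      intro u hu
      have hh0 := hh₁nn u (hsub hu)
      have h1 : x₁ u^2 ≤ 2 * v u := by
        simp only [hvdef]
        nlinarith [sq_nonneg (x₂ u ^ 2), mul_nonneg hh0 (sq_nonneg (x₂ u ^ 2))]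
      have h3 : x₂ u^4 ≤ 4 * v u := by
        simp only [hvdef]
        nlinarith [sq_nonneg (x₁ u), sq_nonneg (x₂ u ^ 2), mul_nonneg hh0 (sq_nonneg (x₂ u ^ 2))]
      have h2 : x₂ u^2 ≤ 2 * Real.sqrt (v u) := by
        calc x₂ u^2 = Real.sqrt ((x₂ u^2)^2) := (Real.sqrt_sq (sq_nonneg _)).symm
          _ ≤ Real.sqrt (4 * v u) := Real.sqrt_le_sqrt (by nlinarith)
          _ = 2 * Real.sqrt (v u) := by
              rw [show (4:ℝ)*v u = 2^2 * v u by ring, Real.sqrt_mul (by norm_num),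
                Real.sqrt_sq (by norm_num)]
      linarith
    -- bootstrap: the state stays small
    have hφ0lt : x₁ 0^2 + x₂ 0^2 < 1/4 := by
      have : R^2 < 1/4 := by nlinarith
      linarith [hφ0R]
    have hbound : ∀ u ∈ Icc (0:ℝ) T, x₁ u^2 + x₂ u^2 < 1/4 := by
      by_contra hcon
      push_neg at hcon
      obtain ⟨u₀, hu₀, hu₀ge⟩ := hcon
      set Bset : Set ℝ :=
        Icc (0:ℝ) T ∩ (fun u => x₁ u^2 + x₂ u^2) ⁻¹' (Ici (1/4)) with hBdef
      have hBne : Bset.Nonempty := ⟨u₀, hu₀, hu₀ge⟩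
      have hBclosed : IsClosed Bset :=
        ((hx₁c.pow 2).add (hx₂c.pow 2)).preimage_isClosed_of_isClosed isClosed_Icc isClosed_Ici
      have hBbdd : BddBelow Bset := ⟨0, fun x hx => hx.1.1⟩
      set t₀ := sInf Bset with ht₀def
      have ht₀B : t₀ ∈ Bset := hBclosed.csInf_mem hBne hBbdd
      have ht₀Icc : t₀ ∈ Icc (0:ℝ) T := ht₀B.1
      have hsmall : ∀ s ∈ Ioo (0:ℝ) t₀, x₁ s^2 + x₂ s^2 ≤ 1/4 := by
        intro s hs
        by_contra hgt
        push_neg at hgt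
        have hsB : s ∈ Bset := ⟨⟨hs.1.le, le_trans hs.2.le ht₀Icc.2⟩, hgt.le⟩
        exact absurd (csInf_le hBbdd hsB) (not_le.2 hs.2)
      have hv0' := gron t₀ ht₀Icc hsmall
      have hexp1 : Real.exp (-(G t₀)) ≤ 1 := by
        rw [← Real.exp_zero]
        exact Real.exp_le_exp.2 (by linarith [hGnn t₀ ht₀Icc.1])
      have h2 : I t₀ ≤ I T := hImono t₀ ht₀Icc
      have hvt₀ : v t₀ ≤ 1/512 := by
        nlinarith [mul_le_mul_of_nonneg_left hexp1 hv0nn]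
      have hsq : Real.sqrt (v t₀) ≤ 1/20 := by
        rw [show (1:ℝ)/20 = Real.sqrt ((1/20)^2) from (Real.sqrt_sq (by norm_num)).symm]
        apply Real.sqrt_le_sqrt
        nlinarith
      have hcontr := hφv t₀ ht₀Icc
      have hge : (1:ℝ)/4 ≤ x₁ t₀^2 + x₂ t₀^2 := ht₀B.2
      linarith [hvnn t₀ ht₀Icc]
    -- final estimate at t
    have hsmallt : ∀ s ∈ Ioo (0:ℝ) t, x₁ s^2 + x₂ s^2 ≤ 1/4 := fun s hs =>
      (hbound s ⟨hs.1.le, le_trans hs.2.le ht.2⟩).le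
    have hvt := gron t ht hsmallt
    have hIt0 : 0 ≤ I t := hInn t ht
    have hAnn : 0 ≤ v 0 * Real.exp (-(G t)) := mul_nonneg hv0nn (Real.exp_pos _).le
    have hBnn : 0 ≤ (1+M) * I t := by nlinarith
    have hexp1 : Real.exp (-(G t)) ≤ 1 := by
      rw [← Real.exp_zero]
      exact Real.exp_le_exp.2 (by linarith [hGnn t ht.1])
    have hvt512 : v t ≤ 1/512 := by
      have h2 : I t ≤ I T := hImono t ht
      nlinarith [mul_le_mul_of_nonneg_left hexp1 hv0nn]
    have hφ4 : x₁ t^2 + x₂ t^2 ≤ 4 * Real.sqrt (v t) := by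
      have h1 := hφv t ht
      have h2 : v t ≤ Real.sqrt (v t) :=
        (Real.le_sqrt (hvnn t ht) (hvnn t ht)).2 (by nlinarith [hvnn t ht])
      linarith
    have hsφ : Real.sqrt (x₁ t^2 + x₂ t^2) ≤ 2 * Real.sqrt (Real.sqrt (v t)) := by
      calc Real.sqrt (x₁ t^2 + x₂ t^2) ≤ Real.sqrt (4 * Real.sqrt (v t)) :=
            Real.sqrt_le_sqrt hφ4
        _ = 2 * Real.sqrt (Real.sqrt (v t)) := by
            rw [show (4:ℝ) * Real.sqrt (v t) = 2^2 * Real.sqrt (v t) by norm_num,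
              Real.sqrt_mul (by norm_num), Real.sqrt_sq (by norm_num)]
    have hsplit : Real.sqrt (Real.sqrt (v t)) ≤
        Real.sqrt (Real.sqrt (v 0 * Real.exp (-(G t))))
          + Real.sqrt (Real.sqrt ((1+M) * I t)) := by
      calc Real.sqrt (Real.sqrt (v t))
          ≤ Real.sqrt (Real.sqrt (v 0 * Real.exp (-(G t)) + (1+M)*I t)) :=
            Real.sqrt_le_sqrt (Real.sqrt_le_sqrt hvt)
        _ ≤ Real.sqrt (Real.sqrt (v 0 * Real.exp (-(G t))) + Real.sqrt ((1+M)*I t)) :=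
            Real.sqrt_le_sqrt (aux_sqrt_add_le _ _ hAnn hBnn)
        _ ≤ _ := aux_sqrt_add_le _ _ (Real.sqrt_nonneg _) (Real.sqrt_nonneg _)
    have hterm1 : Real.sqrt (Real.sqrt (v 0 * Real.exp (-(G t)))) ≤
        Real.sqrt (Real.sqrt c * r0) * Real.exp (-(G t)/4) := by
      have hcr0 : (0:ℝ) ≤ Real.sqrt c * r0 := mul_nonneg (Real.sqrt_nonneg c) hr0nn
      have h1 : v 0 * Real.exp (-(G t)) ≤ (Real.sqrt c * r0)^2 * Real.exp (-(G t)) := by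
        apply mul_le_mul_of_nonneg_right _ (Real.exp_pos _).le
        calc v 0 ≤ c * r0^2 := hv0c
          _ = (Real.sqrt c * r0)^2 := by rw [mul_pow, Real.sq_sqrt hc.le]
      have h2 : Real.sqrt ((Real.sqrt c * r0)^2 * Real.exp (-(G t)))
          = (Real.sqrt c * r0) * Real.exp (-(G t)/2) := by
        rw [Real.sqrt_mul (sq_nonneg _), Real.sqrt_sq hcr0, ← Real.exp_half]
      have h3 : Real.sqrt ((Real.sqrt c * r0) * Real.exp (-(G t)/2))
          = Real.sqrt (Real.sqrt c * r0) * Real.exp (-(G t)/4) := by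
        rw [Real.sqrt_mul hcr0, ← Real.exp_half, show -(G t)/2/2 = -(G t)/4 by ring]
      calc Real.sqrt (Real.sqrt (v 0 * Real.exp (-(G t))))
          ≤ Real.sqrt (Real.sqrt ((Real.sqrt c * r0)^2 * Real.exp (-(G t)))) :=
            Real.sqrt_le_sqrt (Real.sqrt_le_sqrt h1)
        _ = Real.sqrt (Real.sqrt c * r0) * Real.exp (-(G t)/4) := by rw [h2, h3]
    rw [← hIapp t]
    linarith [hsφ, hsplit, hterm1]
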